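/- Let q∈(0,1), assume the intrinsic edge set E_int on the grid U contains at least one edge, and let h(x) ≡ c on U for a constant c ≠ 0. Then 𝓔_int(h) = 0, while under inverted dropout with keep probability q, 𝔼[𝓔_int(m_q ⊙ h)] = ((1−q)/(2q))·c²·Σ_{x∈U} d_x^int > 0; hence the post-mask field has strictly positive expected intrinsic roughness despite starting from a perfectly coherent field. -/

import Mathlib

open MeasureTheory Real

noncomputable section
/-- A point of the `H × W` feature grid `U = {1,…,H} × {1,…,W}` (0-indexed model). -/
abbrev GridPt (H W : ℕ) := Fin H × Fin W

/-- Embedding of the grid into `ℤ × ℤ` with coordinates in `{1,…,H} × {1,…,W}`. -/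
def gridZ {H W : ℕ} (x : GridPt H W) : ℤ × ℤ := ((x.1 : ℤ) + 1, (x.2 : ℤ) + 1)

/-- Nearest-neighbor adjacency on `ℤ × ℤ`: `ℓ¹`-distance one. -/
def adjZ (p q : ℤ × ℤ) : Bool := |p.1 - q.1| + |p.2 - q.2| == 1

/-- The Dirichlet Laplacian matrix on the grid `U` with edge weights `c` and zero
(auxiliary Dirichlet) boundary: `(L_U φ)(x) = ∑_{y : {x,y} ∈ E} c_{xy} (φ(x) − φ̄(y))`
where `φ̄` extends `φ` by zero outside `U`. -/
def dirichletLap (H W : ℕ) (c : ℤ × ℤ → ℤ × ℤ → ℝ) :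
    Matrix (GridPt H W) (GridPt H W) ℝ := fun x y =>
  if x = y then
    ((([((1 : ℤ), (0 : ℤ)), (-1, 0), (0, 1), (0, -1)] : List (ℤ × ℤ)).map
      (fun d => c (gridZ x) (gridZ x + d))).sum)
  else if adjZ (gridZ x) (gridZ y) then -c (gridZ x) (gridZ y) else 0
/-- Intrinsic energy `𝓔_int(f) = (1/2) ∑_{{x,y} ∈ E_int} c_{xy} (f(x) − f(y))²`,
written as `1/4` times the sum over ordered adjacent pairs in `U`. -/
def Eint {H W : ℕ} (c : ℤ × ℤ → ℤ × ℤ → ℝ) (f : GridPt H W → ℝ) : ℝ :=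
  (1 / 4) * ∑ x : GridPt H W, ∑ y : GridPt H W,
    if adjZ (gridZ x) (gridZ y) then c (gridZ x) (gridZ y) * (f x - f y) ^ 2 else 0

/-- Intrinsic weighted degree `d_x^int = ∑_{y : {x,y} ∈ E_int} c_{xy}`. -/
def dInt {H W : ℕ} (c : ℤ × ℤ → ℤ × ℤ → ℝ) (x : GridPt H W) : ℝ :=
  ∑ y : GridPt H W, if adjZ (gridZ x) (gridZ y) then c (gridZ x) (gridZ y) else 0

/-- Interior (intrinsic) graph Laplacian `L_int` on `U`, with no boundary term. -/
def Lint (H W : ℕ) (c : ℤ × ℤ → ℤ × ℤ → ℝ) :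
    Matrix (GridPt H W) (GridPt H W) ℝ := fun x y =>
  if x = y then dInt c x
  else if adjZ (gridZ x) (gridZ y) then -c (gridZ x) (gridZ y) else 0
/-- Inverted-dropout mask `m_q(x) = b(x)/q` built from a Boolean keep pattern `ω`. -/
def maskD {ι : Type*} (q : ℝ) (ω : ι → Bool) (x : ι) : ℝ :=
  (if ω x then (1 : ℝ) else 0) / q

/-- The law of i.i.d. `Bernoulli(q)` keep variables indexed by `ι`
(the canonical product measure, i.e. i.i.d. coordinates). -/
def bernoulliPi (ι : Type*) [Fintype ι] (q : ℝ) (hq : q ≤ 1) :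
    MeasureTheory.Measure (ι → Bool) :=
  MeasureTheory.Measure.pi fun _ =>
    (PMF.bernoulli (Real.toNNReal q) (Real.toNNReal_le_one.mpr hq)).toMeasure

/-! Under `bernoulliPi` the mask values `m(x)` are independent, with `𝔼[m(x)] = 1` and
`𝔼[m(x)²] = 1/q`. Hence on every intrinsic edge `𝔼[(m(x) − m(y))²] = 2/q − 2 = 2(1 − q)/q`,
and summing `c_{xy} c₀² · 2(1 − q)/q` over ordered adjacent pairs, with the factor `1/4` of `Eint`,
gives `((1 − q)/(2q)) c₀² ∑ₓ d_x^int`, which is positive as soon as one edge exists. -/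

open ProbabilityTheory
open scoped NNReal

set_option linter.deprecated false in
lemma integral_bernoulli_toMeasure {p : ℝ≥0} (hp : p ≤ 1) (g : Bool → ℝ) :
    ∫ b, g b ∂(PMF.bernoulli p hp).toMeasure = p * g true + (1 - p) * g false := by
  simp [PMF.integral_eq_sum, PMF.bernoulli_apply, hp]

section Dropout

variable {ι : Type*} [Fintype ι] {q : ℝ}

instance bernoulliPi.isProbabilityMeasure (hq1 : q ≤ 1) :
    IsProbabilityMeasure (bernoulliPi ι q hq1) := by
  unfold bernoulliPi
  infer_instance

lemma integral_comp_eval_bernoulliPi (hq0 : 0 ≤ q) (hq1 : q ≤ 1) (x : ι) (g : Bool → ℝ) :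
    ∫ ω, g (ω x) ∂bernoulliPi ι q hq1 = q * g true + (1 - q) * g false := by
  rw [bernoulliPi, ← integral_map (measurable_pi_apply x).aemeasurable
    Measurable.of_discrete.aestronglyMeasurable, (measurePreserving_eval _ x).map_eq,
    integral_bernoulli_toMeasure, Real.coe_toNNReal _ hq0]

lemma integral_maskD (hq0 : 0 < q) (hq1 : q ≤ 1) (x : ι) :
    ∫ ω, maskD q ω x ∂bernoulliPi ι q hq1 = 1 := by
  simp only [maskD]
  rw [integral_comp_eval_bernoulliPi hq0.le hq1 x fun b => (if b then (1 : ℝ) else 0) / q]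
  field_simp
  simp

lemma integral_maskD_sq (hq0 : 0 < q) (hq1 : q ≤ 1) (x : ι) :
    ∫ ω, maskD q ω x ^ 2 ∂bernoulliPi ι q hq1 = 1 / q := by
  simp only [maskD]
  rw [integral_comp_eval_bernoulliPi hq0.le hq1 x fun b => ((if b then (1 : ℝ) else 0) / q) ^ 2]
  field_simp
  simp

lemma integral_maskD_mul_maskD (hq0 : 0 < q) (hq1 : q ≤ 1) {x y : ι} (hxy : x ≠ y) :
    ∫ ω, maskD q ω x * maskD q ω y ∂bernoulliPi ι q hq1 = 1 := by
  have hindep : iIndepFun (fun i (ω : ι → Bool) => maskD q ω i) (bernoulliPi ι q hq1) :=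
    iIndepFun_pi (Ω := fun _ => Bool) (X := fun _ b => (if b then (1 : ℝ) else 0) / q) fun _ =>
      Measurable.of_discrete.aemeasurable
  rw [(hindep.indepFun hxy).integral_fun_mul_eq_mul_integral
    Measurable.of_discrete.aestronglyMeasurable Measurable.of_discrete.aestronglyMeasurable]
  simp only [integral_maskD hq0 hq1, mul_one]

lemma integral_sq_sub_maskD (hq0 : 0 < q) (hq1 : q ≤ 1) {x y : ι} (hxy : x ≠ y) :
    ∫ ω, (maskD q ω x - maskD q ω y) ^ 2 ∂bernoulliPi ι q hq1 = 2 * (1 - q) / q := by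
  have hexpand : ∀ ω : ι → Bool, (maskD q ω x - maskD q ω y) ^ 2
      = maskD q ω x ^ 2 + maskD q ω y ^ 2 - 2 * (maskD q ω x * maskD q ω y) := fun ω => by ring
  simp_rw [hexpand]
  rw [integral_sub .of_finite .of_finite, integral_add .of_finite .of_finite, integral_const_mul,
    integral_maskD_sq hq0 hq1, integral_maskD_sq hq0 hq1, integral_maskD_mul_maskD hq0 hq1 hxy]
  field_simp
  ring

end Dropout

lemma adjZ_irrefl (p : ℤ × ℤ) : adjZ p p = false := by
  simp [adjZ]

section Grid

variable {H W : ℕ}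

lemma Eint_const (c : ℤ × ℤ → ℤ × ℤ → ℝ) (a : ℝ) : Eint c (fun _ : GridPt H W => a) = 0 := by
  simp [Eint]

lemma integral_Eint_maskD_mul_const (c : ℤ × ℤ → ℤ × ℤ → ℝ) {q : ℝ} (hq0 : 0 < q) (hq1 : q ≤ 1)
    (a : ℝ) :
    ∫ ω, Eint c (fun x => maskD q ω x * a) ∂bernoulliPi (GridPt H W) q hq1 =
      ((1 - q) / (2 * q)) * a ^ 2 * ∑ x : GridPt H W, dInt c x := by
  have hterm : ∀ x y : GridPt H W,
      ∫ ω, (if adjZ (gridZ x) (gridZ y) then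
          c (gridZ x) (gridZ y) * (maskD q ω x * a - maskD q ω y * a) ^ 2 else 0)
        ∂bernoulliPi (GridPt H W) q hq1
      = if adjZ (gridZ x) (gridZ y) then c (gridZ x) (gridZ y) * a ^ 2 * (2 * (1 - q) / q)
        else 0 := by
    intro x y
    split_ifs with hadj
    · have hxy : x ≠ y := by rintro rfl; simp [adjZ_irrefl] at hadj
      simp_rw [← sub_mul, mul_pow, ← mul_assoc, mul_right_comm _ _ (a ^ 2)]
      rw [integral_const_mul, integral_sq_sub_maskD hq0 hq1 hxy]
    · exact integral_zero _ _
  simp only [Eint, dInt]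
  rw [integral_const_mul, integral_finsetSum _ fun _ _ => .of_finite]
  simp_rw [integral_finsetSum _ fun _ _ => Integrable.of_finite, hterm, Finset.mul_sum]
  refine Finset.sum_congr rfl fun x _ => Finset.sum_congr rfl fun y _ => ?_
  split_ifs
  · field_simp
    ring
  · simp

lemma dInt_nonneg {c : ℤ × ℤ → ℤ × ℤ → ℝ} (hpos : ∀ p q : ℤ × ℤ, adjZ p q → 0 < c p q)
    (x : GridPt H W) : 0 ≤ dInt c x :=
  Finset.sum_nonneg fun y _ => by split_ifs with h; exacts [(hpos _ _ h).le, le_rfl]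

lemma dInt_pos {c : ℤ × ℤ → ℤ × ℤ → ℝ} (hpos : ∀ p q : ℤ × ℤ, adjZ p q → 0 < c p q)
    {x y : GridPt H W} (hxy : adjZ (gridZ x) (gridZ y)) : 0 < dInt c x :=
  Finset.sum_pos' (fun z _ => by split_ifs with h; exacts [(hpos _ _ h).le, le_rfl])
    ⟨y, Finset.mem_univ _, by simpa [hxy] using hpos _ _ hxy⟩

lemma sum_dInt_pos {c : ℤ × ℤ → ℤ × ℤ → ℝ} (hpos : ∀ p q : ℤ × ℤ, adjZ p q → 0 < c p q)
    (hedge : ∃ x y : GridPt H W, adjZ (gridZ x) (gridZ y)) : 0 < ∑ x : GridPt H W, dInt c x :=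
  let ⟨x, _, hxy⟩ := hedge
  Finset.sum_pos' (fun x _ => dInt_nonneg hpos x) ⟨x, Finset.mem_univ _, dInt_pos hpos hxy⟩

end Grid

theorem dropout_destroys_perfect_coherence_general {H W : ℕ}
    (c : ℤ × ℤ → ℤ × ℤ → ℝ)
    (hpos : ∀ p q : ℤ × ℤ, adjZ p q → 0 < c p q)
    (hedge : ∃ x y : GridPt H W, adjZ (gridZ x) (gridZ y))
    (q : ℝ) (hq0 : 0 < q) (hq1 : q < 1)
    (c₀ : ℝ) (hc₀ : c₀ ≠ 0) :
    Eint c (fun _ : GridPt H W => c₀) = 0 ∧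
    (∫ ω, Eint c (fun x => maskD q ω x * c₀) ∂(bernoulliPi (GridPt H W) q hq1.le)) =
      ((1 - q) / (2 * q)) * c₀ ^ 2 * ∑ x : GridPt H W, dInt c x ∧
    0 < (∫ ω, Eint c (fun x => maskD q ω x * c₀) ∂(bernoulliPi (GridPt H W) q hq1.le)) := by
  refine ⟨Eint_const c c₀, integral_Eint_maskD_mul_const c hq0 hq1.le c₀, ?_⟩
  have hfactor : 0 < (1 - q) / (2 * q) := div_pos (by linarith) (by linarith)
  rw [integral_Eint_maskD_mul_const c hq0 hq1.le c₀]
  exact mul_pos (mul_pos hfactor (by positivity)) (sum_dInt_pos hpos hedge)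

/-- Immediate loss of perfect coherence under inverted dropout in
expectation: if the intrinsic edge set is nonempty and `h ≡ c₀ ≠ 0` is constant, then
`𝓔_int(h) = 0` while
`𝔼[𝓔_int(m_q ⊙ h)] = ((1−q)/(2q)) c₀² ∑_x d_x^int > 0`. -/
theorem dropout_destroys_perfect_coherence {H W : ℕ}
    (c : ℤ × ℤ → ℤ × ℤ → ℝ)
    (hsym : ∀ p q : ℤ × ℤ, c p q = c q p)
    (hpos : ∀ p q : ℤ × ℤ, adjZ p q → 0 < c p q)
    (hedge : ∃ x y : GridPt H W, adjZ (gridZ x) (gridZ y))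
    (q : ℝ) (hq0 : 0 < q) (hq1 : q < 1)
    (c₀ : ℝ) (hc₀ : c₀ ≠ 0) :
    Eint c (fun _ : GridPt H W => c₀) = 0 ∧
    (∫ ω, Eint c (fun x => maskD q ω x * c₀) ∂(bernoulliPi (GridPt H W) q hq1.le)) =
      ((1 - q) / (2 * q)) * c₀ ^ 2 * ∑ x : GridPt H W, dInt c x ∧
    0 < (∫ ω, Eint c (fun x => maskD q ω x * c₀) ∂(bernoulliPi (GridPt H W) q hq1.le)) :=
  dropout_destroys_perfect_coherence_general c hpos hedge q hq0 hq1 c₀ hc₀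

end
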